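/- (Flatness of the decoupling caps of the moment surface.) There is an absolute constant C > 1 such that the following holds. For every δ ∈ (0,1), every integer k with δ^{1/3} ≤ 2^{-k} ≤ 1, and every interval τ_k = [a, a + (2^k δ)^{1/2}] ⊆ [-1/2, 1/2], the cap τ̃_k = N_δ(x(τ_k × [2^{-k}, 2^{-k+1}])) contains a convex set R such that τ̃_k ⊆ C·R, where C·R denotes the dilation of R by the factor C about its center. In particular each cap τ̃_k is flat, so it cannot be decoupled further without significant loss. -/

import Mathlib

open Set

noncomputable section

abbrev R3 : Type := ℝ × ℝ × ℝ

/-- The vertical `δ`-neighborhood of a set `E ⊆ ℝ³`. -/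
def vnbhd (δ : ℝ) (E : Set R3) : Set R3 :=
  {q | ∃ p ∈ E, ∃ v ∈ Icc (-δ) δ, q = p + ((0 : ℝ), (0 : ℝ), v)}

/-- The parametrization `x(t,s)` of the moment surface. -/
def mx (ts : ℝ × ℝ) : R3 :=
  (ts.1 + ts.2, ts.1 ^ 2 + 2 * ts.1 * ts.2, ts.1 ^ 3 + 3 * ts.1 ^ 2 * ts.2)

/-- The dilation of a set `R` by the factor `C` about the point `z`. -/
def dilate (C : ℝ) (z : R3) (R : Set R3) : Set R3 :=
  (fun y => z + C • (y - z)) '' R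

/-!
In the affine chart based at `φ(a)` with axes `φ'(a)`, `φ''(a)`, `φ'''(a)/6`, the point
`x(a + u, s)` has coordinates `(u + s, u²/2 + su, u³ + 3su²)`, independently of `a`. Put
`σ = 2^{-k}` and `L = (δ/σ)^{1/2}`, so that `σL² = δ` and `L ≤ σ` because `δ ≤ σ³`. In the
chart, the cap then contains the box `[σ + L/4, 2σ] × [0, σL/4] × [-δ/2, δ/2]` and is contained
in `[σ, 3σ] × [0, 5σL/2] × [-δ, 8δ]`, which lies in the `100`-fold dilate of the first box about
its center. The chart is affine, so it carries the box to a convex set and commutes with dilations.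
-/

/-- `φ(a) + p₁ φ'(a) + p₂ φ''(a) + p₃ φ'''(a) / 6` for the moment curve `φ(t) = (t, t², t³)`. -/
def oscChart (a : ℝ) (p : R3) : R3 :=
  (a + p.1, a ^ 2 + 2 * a * p.1 + 2 * p.2.1, a ^ 3 + 3 * a ^ 2 * p.1 + 6 * a * p.2.1 + p.2.2)

lemma oscChart_add_smul_sub (a c : ℝ) (p q : R3) :
    oscChart a (p + c • (q - p)) = oscChart a p + c • (oscChart a q - oscChart a p) := by
  simp only [oscChart, Prod.fst_add, Prod.snd_add, Prod.smul_fst, Prod.smul_snd, Prod.fst_sub,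
    Prod.snd_sub, smul_eq_mul, Prod.mk_add_mk, Prod.mk_sub_mk, Prod.smul_mk, Prod.mk.injEq]
  refine ⟨by ring, by ring, by ring⟩

lemma Convex.image_oscChart {B : Set R3} (hB : Convex ℝ B) (a : ℝ) :
    Convex ℝ (oscChart a '' B) := by
  rw [convex_iff_segment_subset]
  rintro _ ⟨p, hp, rfl⟩ _ ⟨q, hq, rfl⟩
  rw [segment_eq_image']
  rintro _ ⟨c, hc, rfl⟩
  exact ⟨p + c • (q - p), hB.add_smul_sub_mem hp hq hc, oscChart_add_smul_sub a c p q⟩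

lemma image_oscChart_dilate (a C : ℝ) (z : R3) (B : Set R3) :
    oscChart a '' dilate C z B = dilate C (oscChart a z) (oscChart a '' B) := by
  simp only [dilate, image_image, oscChart_add_smul_sub]

def chartPoint (p : R3) : R3 :=
  (p.1 + p.2.1, p.1 ^ 2 / 2 + p.2.1 * p.1, p.1 ^ 3 + 3 * p.2.1 * p.1 ^ 2 + p.2.2)

lemma oscChart_chartPoint (a u s v : ℝ) :
    oscChart a (chartPoint (u, s, v)) = mx (a + u, s) + (0, 0, v) := by
  simp only [oscChart, chartPoint, mx, Prod.mk_add_mk, Prod.mk.injEq]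
  refine ⟨by ring, by ring, by ring⟩

lemma vnbhd_image_mx_eq (δ a L : ℝ) (S : Set ℝ) :
    vnbhd δ (mx '' (Icc a (a + L) ×ˢ S)) =
      oscChart a '' (chartPoint '' (Icc 0 L ×ˢ S ×ˢ Icc (-δ) δ)) := by
  ext q
  constructor
  · rintro ⟨_, ⟨⟨t, s⟩, ⟨⟨hat, hta⟩, hs⟩, rfl⟩, v, hv, rfl⟩
    refine ⟨chartPoint (t - a, s, v),
      ⟨(t - a, s, v), ⟨⟨by linarith, by linarith⟩, hs, hv⟩, rfl⟩, ?_⟩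
    rw [oscChart_chartPoint, add_sub_cancel]
  · rintro ⟨_, ⟨⟨u, s, v⟩, ⟨⟨hu₀, huL⟩, hs, hv⟩, rfl⟩, rfl⟩
    exact ⟨_, ⟨(a + u, s), ⟨⟨by linarith, by linarith⟩, hs⟩, rfl⟩, v, hv,
      oscChart_chartPoint a u s v⟩

lemma Icc_subset_dilate_Icc {C : ℝ} (hC : 0 < C) {z lo hi lo' hi' : R3}
    (hlo : z + C • (lo - z) ≤ lo') (hhi : hi' ≤ z + C • (hi - z)) :
    Icc lo' hi' ⊆ dilate C z (Icc lo hi) := by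
  rintro p ⟨hp₁, hp₂⟩
  refine ⟨z + C⁻¹ • (p - z), ⟨?_, ?_⟩, by simp [smul_smul, hC.ne']⟩
  · rw [← sub_le_iff_le_add', le_inv_smul_iff_of_pos hC, le_sub_iff_add_le']
    exact hlo.trans hp₁
  · rw [← le_sub_iff_add_le', inv_smul_le_iff_of_pos hC, sub_le_iff_le_add']
    exact hp₂.trans hhi

def flatBox (σ L δ : ℝ) : Set R3 :=
  Icc (σ + L / 4, 0, -(δ / 2)) (2 * σ, σ * L / 4, δ / 2)

section ChartedCap

variable {σ L δ : ℝ}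

lemma flatBox_subset_image_chartPoint (hL : 0 ≤ L) (hδ : σ * L ^ 2 ≤ δ) :
    flatBox σ L δ ⊆ chartPoint '' (Icc 0 L ×ˢ Icc σ (2 * σ) ×ˢ Icc (-δ) δ) := by
  rintro ⟨α, β, w⟩ ⟨⟨hα₁, hβ₁, hw₁⟩, ⟨hα₂, hβ₂, hw₂⟩⟩
  -- solve `β = α u - u²/2` for `u ∈ [0, L/4]`; then `s = α - u`, `v = w - (3 α u² - 2 u³)`
  obtain ⟨u, ⟨hu₀, huL⟩, rfl⟩ : ∃ u ∈ Icc 0 (L / 4), α * u - u ^ 2 / 2 = β :=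
    intermediate_value_Icc (by positivity) (by fun_prop)
      ⟨by simpa using hβ₁, by nlinarith⟩
  refine ⟨(u, α - u, w - (3 * α * u ^ 2 - 2 * u ^ 3)), ⟨⟨by linarith, by linarith⟩,
    ⟨by linarith, by linarith⟩, ⟨by nlinarith, by nlinarith⟩⟩, ?_⟩
  simp only [chartPoint, Prod.mk.injEq]
  refine ⟨by ring, by ring, by ring⟩

lemma image_chartPoint_subset_Icc (hL : 0 ≤ L) (hLσ : L ≤ σ) (hδ : σ * L ^ 2 ≤ δ) :
    chartPoint '' (Icc 0 L ×ˢ Icc σ (2 * σ) ×ˢ Icc (-δ) δ) ⊆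
      Icc (σ, 0, -δ) (3 * σ, 5 / 2 * σ * L, 8 * δ) := by
  rintro _ ⟨⟨u, s, v⟩, ⟨⟨hu₀, huL⟩, ⟨hs₁, hs₂⟩, ⟨hv₁, hv₂⟩⟩, rfl⟩
  refine ⟨⟨?_, ?_, ?_⟩, ⟨?_, ?_, ?_⟩⟩ <;> dsimp only [chartPoint]
  all_goals nlinarith [mul_nonneg (mul_nonneg hu₀ hu₀) (sub_nonneg.2 (huL.trans hLσ)),
    mul_nonneg (mul_nonneg hu₀ hu₀) (sub_nonneg.2 hs₂),
    mul_le_mul_of_nonneg_left (pow_le_pow_left₀ hu₀ huL 2) (hL.trans hLσ)]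

lemma image_chartPoint_subset_dilate_flatBox (hL : 0 ≤ L) (hLσ : L ≤ σ)
    (hδ : σ * L ^ 2 ≤ δ) :
    chartPoint '' (Icc 0 L ×ˢ Icc σ (2 * σ) ×ˢ Icc (-δ) δ) ⊆
      dilate 100 ((3 * σ + L / 4) / 2, σ * L / 8, 0) (flatBox σ L δ) := by
  refine (image_chartPoint_subset_Icc hL hLσ hδ).trans
    (Icc_subset_dilate_Icc (by norm_num) ?_ ?_)
  all_goals
    simp only [Prod.le_def, Prod.mk_add_mk, Prod.mk_sub_mk, Prod.smul_mk, smul_eq_mul]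
    refine ⟨by nlinarith, by nlinarith, by nlinarith⟩

end ChartedCap

lemma inv_mul_rpow_one_half_le {σ δ : ℝ} (hσ : 0 < σ) (h : δ ≤ σ ^ 3) :
    (σ⁻¹ * δ) ^ ((1 : ℝ) / 2) ≤ σ := by
  rw [← Real.sqrt_eq_rpow, Real.sqrt_le_left hσ.le, inv_mul_le_iff₀ hσ]
  linarith [pow_succ σ 2]

lemma mul_inv_mul_rpow_one_half_sq {σ δ : ℝ} (hσ : 0 < σ) (hδ : 0 ≤ δ) :
    σ * ((σ⁻¹ * δ) ^ ((1 : ℝ) / 2)) ^ 2 = δ := by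
  rw [← Real.sqrt_eq_rpow, Real.sq_sqrt (by positivity), mul_inv_cancel_left₀ hσ.ne']

/-- **Flatness of the decoupling caps of the moment surface**: there is an absolute
constant `C > 1` such that every cap `τ̃_k = N_δ(x(τ_k × [2^{-k}, 2^{-k+1}]))`, with
`δ^{1/3} ≤ 2^{-k} ≤ 1` and `τ_k = [a, a + (2^k δ)^{1/2}] ⊆ [-1/2, 1/2]`, contains a
convex set `R` with `τ̃_k ⊆ C·R` (dilation about a center of `R`); i.e. each cap is flat. -/
theorem moment_caps_flat :
    ∃ C : ℝ, 1 < C ∧ ∀ δ : ℝ, 0 < δ → δ < 1 → ∀ k : ℤ,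
      δ ^ ((1:ℝ)/3) ≤ (2:ℝ) ^ (-k) → (2:ℝ) ^ (-k) ≤ 1 →
      ∀ a : ℝ, -(1/2) ≤ a → a + ((2:ℝ) ^ k * δ) ^ ((1:ℝ)/2) ≤ 1/2 →
      ∃ R : Set R3, Convex ℝ R ∧
        R ⊆ vnbhd δ (mx '' (Icc a (a + ((2:ℝ) ^ k * δ) ^ ((1:ℝ)/2)) ×ˢ
          Icc ((2:ℝ) ^ (-k)) ((2:ℝ) ^ (-k + 1)))) ∧
        ∃ z : R3,
          vnbhd δ (mx '' (Icc a (a + ((2:ℝ) ^ k * δ) ^ ((1:ℝ)/2)) ×ˢ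
            Icc ((2:ℝ) ^ (-k)) ((2:ℝ) ^ (-k + 1)))) ⊆ dilate C z R := by
  refine ⟨100, by norm_num, fun δ hδ _ k hk _ a _ _ => ?_⟩
  set σ : ℝ := 2 ^ (-k)
  have hσ : 0 < σ := by positivity
  have h2k : (2 : ℝ) ^ k = σ⁻¹ := by simp [σ, zpow_neg]
  have h2σ : (2 : ℝ) ^ (-k + 1) = 2 * σ := by
    rw [zpow_add_one₀ two_ne_zero, mul_comm]
  have hδσ : δ ≤ σ ^ 3 := by
    rw [one_div, Real.rpow_inv_le_iff_of_pos hδ.le hσ.le three_pos] at hk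
    exact_mod_cast hk
  rw [h2k, h2σ, vnbhd_image_mx_eq]
  set L := (σ⁻¹ * δ) ^ ((1 : ℝ) / 2)
  have hL : 0 ≤ L := by positivity
  have hLσ : L ≤ σ := inv_mul_rpow_one_half_le hσ hδσ
  have hσL : σ * L ^ 2 ≤ δ := (mul_inv_mul_rpow_one_half_sq hσ hδ.le).le
  refine ⟨oscChart a '' flatBox σ L δ, (convex_Icc _ _).image_oscChart a,
    image_mono (flatBox_subset_image_chartPoint hL hσL),
    oscChart a ((3 * σ + L / 4) / 2, σ * L / 8, 0), ?_⟩
  rw [← image_oscChart_dilate]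
  exact image_mono (image_chartPoint_subset_dilate_flatBox hL hLσ hσL)
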